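/- Let μ be a belief on a nonempty finite set S, let A ⊆ S satisfy μ(A) > 0, let u : X → ℝ with [−1,1] contained in the range of u, and let M_A be a nonempty closed convex set of beliefs on S. Assume that for all acts f, g: if ∑_{s∈S} u(f(s))μ(s) ≥ ∑_{s∈S} u(g(s))μ(s) and ∑_{s∈S} u((fAg)(s))μ(s) ≥ ∑_{s∈S} u(g(s))μ(s), then ∑_{s∈S} u(f(s))π(s) ≥ ∑_{s∈S} u(g(s))π(s) for every π ∈ M_A. Then there exists a nonempty closed convex set W ⊆ [0,1] such that M_A = { δ·μ + (1−δ)·B(μ,A) : δ ∈ W }. (Corollary to Theorem 2: if the initial preference is complete, i.e., a single prior, then posterior belief sets are parametrized by a set of confidence weights.) -/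

import Mathlib

/-!
Dynamic consistency, tested on acts whose utility profiles are small multiples of an arbitrary
vector `z` against a constant act of utility `0`, says: every `π ∈ M_A` gives `z` a nonnegative
expectation as soon as both `μ` and `B(μ,A)` do. By Hahn–Banach, a probability vector outside the
segment `[B(μ,A), μ]` could be strictly separated from it by such a `z`, so `M_A` lies on that
segment; a closed convex subset of a segment is the image of a closed convex set of weights.
-/

open Finset

noncomputable def bayes {S : Type*} [DecidableEq S] (μ : S → ℝ) (A : Finset S) : S → ℝ :=
  fun s => if s ∈ A then μ s / ∑ t ∈ A, μ t else 0

def splice {S X : Type*} [DecidableEq S] (f g : S → X) (A : Finset S) : S → X :=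
  fun s => if s ∈ A then f s else g s

open Matrix

theorem dotProduct_bayes {S : Type*} [Fintype S] [DecidableEq S] (μ z : S → ℝ) (A : Finset S) :
    z ⬝ᵥ bayes μ A = (∑ s ∈ A, z s * μ s) / ∑ s ∈ A, μ s := by
  simp only [dotProduct, bayes, mul_ite, mul_zero, Finset.sum_ite_mem, univ_inter, Finset.sum_div,
    mul_div_assoc]

theorem sum_bayes {S : Type*} [Fintype S] [DecidableEq S] {μ : S → ℝ} {A : Finset S}
    (hA : ∑ s ∈ A, μ s ≠ 0) : ∑ s, bayes μ A s = 1 := by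
  simpa [← one_dotProduct, dotProduct_bayes] using div_self hA

theorem exists_comp_eq_pos_smul_of_Icc_subset_range {S X : Type*} [Fintype S] {u : X → ℝ}
    (hu : Set.Icc (-1 : ℝ) 1 ⊆ Set.range u) (z : S → ℝ) :
    ∃ c : ℝ, 0 < c ∧ ∃ f : S → X, u ∘ f = c • z := by
  have hc : 0 < (‖z‖ + 1)⁻¹ := by positivity
  have hmem : ∀ s, (‖z‖ + 1)⁻¹ * z s ∈ Set.Icc (-1 : ℝ) 1 := fun s => by
    rw [Set.mem_Icc, ← abs_le, abs_mul, abs_of_pos hc, inv_mul_le_one₀ (by positivity)]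
    linarith [norm_le_pi_norm z s, Real.norm_eq_abs (z s)]
  choose f hf using fun s => hu (hmem s)
  exact ⟨_, hc, f, funext hf⟩

theorem dotProduct_nonneg_of_dynamicConsistency {S X : Type*} [Fintype S] [DecidableEq S]
    {μ π : S → ℝ} {A : Finset S} {u : X → ℝ} (hu : Set.Icc (-1 : ℝ) 1 ⊆ Set.range u)
    (hDC : ∀ f g : S → X, (u ∘ g) ⬝ᵥ μ ≤ (u ∘ f) ⬝ᵥ μ → (u ∘ g) ⬝ᵥ μ ≤ (u ∘ splice f g A) ⬝ᵥ μ →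
      (u ∘ g) ⬝ᵥ π ≤ (u ∘ f) ⬝ᵥ π)
    {z : S → ℝ} (hμ : 0 ≤ z ⬝ᵥ μ) (hA : 0 ≤ ∑ s ∈ A, z s * μ s) : 0 ≤ z ⬝ᵥ π := by
  obtain ⟨c, hc, f, hf⟩ := exists_comp_eq_pos_smul_of_Icc_subset_range hu z
  obtain ⟨x₀, hx₀⟩ := hu (show (0 : ℝ) ∈ Set.Icc (-1) 1 by norm_num)
  have hzero : ∀ w : S → ℝ, (u ∘ fun _ => x₀) ⬝ᵥ w = 0 := fun w => by
    simp [dotProduct, hx₀]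
  have hsplice : (u ∘ splice f (fun _ => x₀) A) ⬝ᵥ μ = c * ∑ s ∈ A, z s * μ s := by
    have hfs : ∀ s, u (f s) = c * z s := fun s => congrFun hf s
    simp only [dotProduct, Function.comp_def, splice, apply_ite u, hx₀, hfs, ite_mul, zero_mul,
      Finset.sum_ite_mem, univ_inter, Finset.mul_sum, mul_assoc]
  have h := hDC f (fun _ => x₀)
    (by rw [hzero, hf, smul_dotProduct, smul_eq_mul]; positivity)
    (by rw [hzero, hsplice]; positivity)
  rw [hzero, hf, smul_dotProduct, smul_eq_mul] at h
  exact nonneg_of_mul_nonneg_right h hc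

theorem isClosed_segment {E : Type*} [AddCommGroup E] [Module ℝ E] [TopologicalSpace E]
    [IsTopologicalAddGroup E] [ContinuousSMul ℝ E] [T2Space E] (x y : E) :
    IsClosed (segment ℝ x y) := by
  rw [segment_eq_image_lineMap]
  exact (isCompact_Icc.image AffineMap.lineMap_continuous).isClosed

theorem mem_segment_of_forall_dotProduct_nonneg {S : Type*} [Fintype S] {μ ν π : S → ℝ}
    (hμ : ∑ s, μ s = 1) (hν : ∑ s, ν s = 1) (hπ : ∑ s, π s = 1)
    (h : ∀ z : S → ℝ, 0 ≤ z ⬝ᵥ μ → 0 ≤ z ⬝ᵥ ν → 0 ≤ z ⬝ᵥ π) : π ∈ segment ℝ ν μ := by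
  classical
  by_contra hπν
  obtain ⟨l, t, hlt, htπ⟩ :=
    geometric_hahn_banach_closed_point (convex_segment ν μ) (isClosed_segment ν μ) hπν
  set c : S → ℝ := fun i => l fun j => if i = j then 1 else 0
  have hz : ∀ w : S → ℝ, (t • 1 - c) ⬝ᵥ w = t * ∑ s, w s - l w := fun w => by
    have hl : l w = w ⬝ᵥ c := by
      simpa [dotProduct] using LinearMap.pi_apply_eq_sum_univ (l : (S → ℝ) →ₗ[ℝ] ℝ) w
    rw [sub_dotProduct, smul_dotProduct, one_dotProduct, smul_eq_mul, dotProduct_comm, hl]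
  have hπz := h (t • 1 - c)
    (by rw [hz, hμ]; linarith [hlt μ (right_mem_segment ℝ ν μ)])
    (by rw [hz, hν]; linarith [hlt ν (left_mem_segment ℝ ν μ)])
  rw [hz, hπ] at hπz
  linarith

theorem exists_weights_of_subset_segment {E : Type*} [AddCommGroup E] [Module ℝ E]
    [TopologicalSpace E] [IsTopologicalAddGroup E] [ContinuousSMul ℝ E] {x y : E} {M : Set E}
    (hne : M.Nonempty) (hclosed : IsClosed M) (hconvex : Convex ℝ M) (hM : M ⊆ segment ℝ x y) :
    ∃ W : Set ℝ, W.Nonempty ∧ IsClosed W ∧ Convex ℝ W ∧ W ⊆ Set.Icc (0 : ℝ) 1 ∧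
      M = AffineMap.lineMap x y '' W := by
  have hM' : M ⊆ AffineMap.lineMap x y '' (Set.Icc (0 : ℝ) 1 ∩ AffineMap.lineMap x y ⁻¹' M) := by
    intro p hp
    obtain ⟨δ, hδ, rfl⟩ := (segment_eq_image_lineMap ℝ x y ▸ hM) hp
    exact ⟨δ, ⟨hδ, hp⟩, rfl⟩
  refine ⟨Set.Icc (0 : ℝ) 1 ∩ AffineMap.lineMap x y ⁻¹' M, (hne.mono hM').of_image,
    isClosed_Icc.inter (hclosed.preimage AffineMap.lineMap_continuous),
    (convex_Icc 0 1).inter (hconvex.affine_preimage _), Set.inter_subset_left,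
    hM'.antisymm ?_⟩
  rintro _ ⟨δ, ⟨-, hδ⟩, rfl⟩
  exact hδ

theorem stmt15_general {S X : Type*} [Fintype S] [DecidableEq S]
    (μ : S → ℝ) (hμ1 : ∑ s, μ s = 1)
    (A : Finset S) (hA : 0 < ∑ s ∈ A, μ s)
    (u : X → ℝ) (hu : Set.Icc (-1:ℝ) 1 ⊆ Set.range u)
    (MA : Set (S → ℝ)) (hMA : MA.Nonempty) (hMAclosed : IsClosed MA)
    (hMAconvex : Convex ℝ MA)
    (hMAb : ∀ π ∈ MA, (∀ s, 0 ≤ π s) ∧ ∑ s, π s = 1)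
    (hDC : ∀ f g : S → X,
      ∑ s, u (f s) * μ s ≥ ∑ s, u (g s) * μ s →
      ∑ s, u (splice f g A s) * μ s ≥ ∑ s, u (g s) * μ s →
      ∀ π ∈ MA, ∑ s, u (f s) * π s ≥ ∑ s, u (g s) * π s) :
    ∃ W : Set ℝ, W.Nonempty ∧ IsClosed W ∧ Convex ℝ W ∧ W ⊆ Set.Icc (0:ℝ) 1 ∧
      MA = {π : S → ℝ | ∃ δ ∈ W,
        π = fun s => δ * μ s + (1 - δ) * bayes μ A s} := by
  have hseg : MA ⊆ segment ℝ (bayes μ A) μ := fun π hπ =>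
    mem_segment_of_forall_dotProduct_nonneg hμ1 (sum_bayes hA.ne') (hMAb π hπ).2
      fun z hzμ hzν => dotProduct_nonneg_of_dynamicConsistency hu
        (fun f g h₁ h₂ => hDC f g h₁ h₂ π hπ) hzμ
        (by rwa [dotProduct_bayes, le_div_iff₀ hA, zero_mul] at hzν)
  obtain ⟨W, hWne, hWclosed, hWconvex, hW01, rfl⟩ :=
    exists_weights_of_subset_segment hMA hMAclosed hMAconvex hseg
  refine ⟨W, hWne, hWclosed, hWconvex, hW01, ?_⟩
  ext π
  simp only [Set.mem_image, Set.mem_ofPred_eq, AffineMap.lineMap_apply_module, eq_comm (a := π)]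
  refine exists_congr fun δ => and_congr_right fun _ => ?_
  rw [funext_iff, funext_iff]
  refine forall_congr' fun s => ?_
  simp only [Pi.add_apply, Pi.smul_apply, smul_eq_mul, add_comm]

/-- Corollary to Theorem 2: with a single prior, posterior belief sets are
parametrized by a nonempty closed convex set of confidence weights. -/
theorem stmt15 {S X : Type*} [Fintype S] [DecidableEq S] [Nonempty S]
    (μ : S → ℝ) (hμ0 : ∀ s, 0 ≤ μ s) (hμ1 : ∑ s, μ s = 1)
    (A : Finset S) (hA : 0 < ∑ s ∈ A, μ s)
    (u : X → ℝ) (hu : Set.Icc (-1:ℝ) 1 ⊆ Set.range u)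
    (MA : Set (S → ℝ)) (hMA : MA.Nonempty) (hMAclosed : IsClosed MA)
    (hMAconvex : Convex ℝ MA)
    (hMAb : ∀ π ∈ MA, (∀ s, 0 ≤ π s) ∧ ∑ s, π s = 1)
    (hDC : ∀ f g : S → X,
      ∑ s, u (f s) * μ s ≥ ∑ s, u (g s) * μ s →
      ∑ s, u (splice f g A s) * μ s ≥ ∑ s, u (g s) * μ s →
      ∀ π ∈ MA, ∑ s, u (f s) * π s ≥ ∑ s, u (g s) * π s) :
    ∃ W : Set ℝ, W.Nonempty ∧ IsClosed W ∧ Convex ℝ W ∧ W ⊆ Set.Icc (0:ℝ) 1 ∧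
      MA = {π : S → ℝ | ∃ δ ∈ W,
        π = fun s => δ * μ s + (1 - δ) * bayes μ A s} :=
  stmt15_general μ hμ1 A hA u hu MA hMA hMAclosed hMAconvex hMAb hDC
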